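/- arXiv:2307.12259 — 7 statements merged into one kernel-verified Lean document; each statement's English description precedes it below -/
import Mathlib

section
/- Let f(t) = sin(πt) − t/(1−t). Then f(t) > 0 for all t in the open interval (0, 1/2). -/
open Real

theorem sin_sub_ratio_pos :
    ∀ t ∈ Set.Ioo (0 : ℝ) (1 / 2), 0 < Real.sin (π * t) - t / (1 - t) := by
  rintro t ⟨ht0, ht1⟩
  have h2 : (2 * t) ≤ Real.sin (π / 2 * (2 * t)) := by
    apply Real.le_sin_mul (by linarith) (by linarith)
  have heq : π / 2 * (2 * t) = π * t := by ring
  rw [heq] at h2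
  have hpos : (0:ℝ) < 1 - t := by linarith
  have : t / (1 - t) < 2 * t := by
    rw [div_lt_iff₀ hpos]
    nlinarith
  linarith
end

section
/- For every integer N ≥ 3 and every integer j ≥ 2 with j − 1 < N/2, one has sin(π(j−1)/N) > (j−1)/(N−j+1). -/
open Real

theorem sin_gt_ratio (N j : ℕ) (hN : 3 ≤ N) (hj : 2 ≤ j)
    (hjN : (j : ℝ) - 1 < (N : ℝ) / 2) :
    Real.sin (π * ((j : ℝ) - 1) / (N : ℝ)) > ((j : ℝ) - 1) / ((N : ℝ) - (j : ℝ) + 1) := by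
  set x : ℝ := (j : ℝ) - 1 with hx
  have hx1 : (1 : ℝ) ≤ x := by
    have : (2 : ℝ) ≤ (j : ℝ) := by exact_mod_cast hj
    linarith
  have hN3 : (3 : ℝ) ≤ (N : ℝ) := by exact_mod_cast hN
  have hNpos : (0 : ℝ) < N := by linarith
  have hπ := Real.pi_pos
  have hθ0 : 0 ≤ π * x / N := by positivity
  have hθ1 : π * x / N ≤ π / 2 := by
    rw [div_le_div_iff₀ hNpos (by norm_num)]
    nlinarith
  have hjordan := Real.mul_le_sin hθ0 hθ1
  have key : x / ((N : ℝ) - x) < 2 / π * (π * x / N) := by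
    have h2 : 2 / π * (π * x / N) = 2 * x / N := by
      field_simp
    rw [h2]
    rw [div_lt_div_iff₀ (by linarith) hNpos]
    nlinarith
  calc ((j : ℝ) - 1) / ((N : ℝ) - (j : ℝ) + 1) = x / ((N : ℝ) - x) := by
        rw [hx]; ring_nf
    _ < 2 / π * (π * x / N) := key
    _ ≤ Real.sin (π * x / N) := hjordan
end

section
/- For every integer N ≥ 3 and every integer j with 2 ≤ j and j − 1 < N/2, the quantity u + v is negative, where u = j − 1 and v = −(N − j + 1)·sin(π(j−1)/N). -/
open Real

theorem u_add_v_neg (N j : ℕ) (hN : 3 ≤ N) (hj : 2 ≤ j)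
    (hjN : (j : ℝ) - 1 < (N : ℝ) / 2) :
    ((j : ℝ) - 1) + (-(((N : ℝ) - (j : ℝ) + 1) * Real.sin (π * ((j : ℝ) - 1) / (N : ℝ)))) < 0 := by
  have hNpos : (0:ℝ) < N := by positivity
  have hj1 : (1:ℝ) ≤ (j:ℝ) - 1 := by
    have : (2:ℝ) ≤ j := by exact_mod_cast hj
    linarith
  have hpi := Real.pi_pos
  set t : ℝ := π * ((j:ℝ) - 1) / N with ht
  have htnn : 0 ≤ t := by positivity
  have ht2 : t ≤ π / 2 := by
    rw [ht, div_le_div_iff₀ hNpos two_pos]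
    nlinarith
  have hsin := Real.mul_le_sin htnn ht2
  have hsin' : 2 * ((j:ℝ) - 1) / N ≤ Real.sin t := by
    have : 2 / π * t = 2 * ((j:ℝ) - 1) / N := by
      rw [ht, div_mul_div_comm, mul_left_comm (2:ℝ) π, mul_div_mul_left _ _ hpi.ne']
    linarith [this ▸ hsin]
  have hfac : (0:ℝ) < (N:ℝ) - j + 1 := by linarith
  have key : ((j:ℝ) - 1) < ((N:ℝ) - j + 1) * Real.sin t := by
    have h1 : ((N:ℝ) - j + 1) * (2 * ((j:ℝ) - 1) / N) ≤ ((N:ℝ) - j + 1) * Real.sin t :=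
      mul_le_mul_of_nonneg_left hsin' hfac.le
    have h2 : ((j:ℝ) - 1) < ((N:ℝ) - j + 1) * (2 * ((j:ℝ) - 1) / N) := by
      rw [mul_div_assoc', lt_div_iff₀ hNpos]
      nlinarith
    linarith
  linarith
end

section
/- Let N ≥ 3 and let B₀, B₂, …, B_{2(N−1)} be N unit vectors in ℝ² summing to zero, listed in counterclockwise cyclic order. Fix j with 2 ≤ j and j − 1 < N/2, and suppose the counterclockwise angle θ_j from B₀ to B_{2j} satisfies θ_j ≥ π + 2(j−1)π/N. Rotate so that B₀ and B_{2j} have the same y-coordinate with B₀ to the right. Then the common y-coordinate of B₀ and B_{2j} is at most −sin(π(j−1)/N), and the sum of all N y-coordinates is strictly negative — contradicting the balance condition. Hence θ_j < π + 2(j−1)π/N. -/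
/-!
Suppose `θ_j ≥ π + 2(j-1)π/N` and rotate by `(π - θ_j)/2`, so that the vectors at angles `0`
and `θ_j` share the height `cos (θ_j / 2)`. Every vector outside the open arc between them lies
on the complementary arc, which passes through the bottom of the circle, hence no higher, while
the `j - 1` vectors on the open arc have height at most `1`. Jordan's inequality gives `cos (θ_j / 2) ≤ -2(j-1)/N`, so the
rotated heights sum to at most `(j-1) - (N-j+1)·2(j-1)/N = (j-1)(2(j-1) - N)/N < 0`, whereas
rotation preserves the balance condition.
-/

open Real Finset

theorem Real.sin_le_sin_of_abs_add_pi_div_two_le {x y : ℝ}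
    (hxy : |x + π / 2| ≤ |y + π / 2|) (hy : |y + π / 2| ≤ π) : sin x ≤ sin y := by
  have h := cos_le_cos_of_nonneg_of_le_pi (abs_nonneg _) hy hxy
  rw [cos_abs, cos_abs, cos_add_pi_div_two, cos_add_pi_div_two] at h
  linarith

theorem Real.sin_add_pi_sub_div_two_le_cos_half {T x : ℝ} (hT : 0 ≤ T) (hTx : T ≤ x)
    (hx : x ≤ 2 * π) : sin (x + (π - T) / 2) ≤ cos (T / 2) := by
  rw [← sin_sub_two_pi, ← sin_pi_div_two_sub]
  apply sin_le_sin_of_abs_add_pi_div_two_le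
  · rw [abs_le, abs_of_nonneg (by linarith)]
    constructor <;> linarith
  · rw [abs_of_nonneg (by linarith)]
    linarith

theorem Real.cos_half_le_neg_of_pi_add_mul_pi_le {T a : ℝ} (ha : 0 ≤ a) (hT : π + a * π ≤ T)
    (hT₂ : T ≤ 2 * π) : cos (T / 2) ≤ -a := by
  have hjordan := mul_le_sin (x := T / 2 - π / 2)
    (by linarith [mul_nonneg ha pi_pos.le]) (by linarith)
  rw [sin_sub_pi_div_two, show 2 / π * (T / 2 - π / 2) = (T - π) / π by field_simp] at hjordan
  have : a ≤ (T - π) / π := by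
    rw [le_div_iff₀ pi_pos]
    linarith
  linarith

theorem Finset.sum_sin_add_eq_zero {ι : Type*} (s : Finset ι) (θ : ι → ℝ) (α : ℝ)
    (hcos : ∑ i ∈ s, cos (θ i) = 0) (hsin : ∑ i ∈ s, sin (θ i) = 0) :
    ∑ i ∈ s, sin (θ i + α) = 0 := by
  simp only [sin_add, sum_add_distrib, ← sum_mul, hcos, hsin]
  ring

theorem Finset.sum_le_card_mul_add_card_sub_mul {ι : Type*} [Fintype ι] [DecidableEq ι]
    (s : Finset ι) (f : ι → ℝ) {a b : ℝ} (ha : ∀ i ∈ s, f i ≤ a) (hb : ∀ i ∉ s, f i ≤ b) :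
    ∑ i, f i ≤ #s * a + (Fintype.card ι - #s) * b := by
  rw [← sum_add_sum_compl s f]
  have hs := sum_le_card_nsmul s f a ha
  have hsc := sum_le_card_nsmul sᶜ f b fun i hi => hb i (mem_compl.mp hi)
  rw [card_compl, nsmul_eq_mul, Nat.cast_sub (card_le_univ s)] at hsc
  rw [nsmul_eq_mul] at hs
  linarith

theorem add_sub_mul_neg_of_le_neg_two_mul_div {m n c : ℝ} (hm : 0 < m) (hmn : 2 * m < n)
    (hc : c ≤ -(2 * m / n)) : m + (n - m) * c < 0 := by
  have hn : 0 < n := by linarith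
  calc m + (n - m) * c ≤ m + (n - m) * -(2 * m / n) := by gcongr; linarith
    _ = m * (2 * m - n) / n := by field_simp; ring
    _ < 0 := div_neg_of_neg_of_pos (mul_neg_of_pos_of_neg hm (by linarith)) hn

/-- For a balanced `N`-sunburst `B k = (cos (θ k), sin (θ k))`, normalized so that
`θ 0 = 0` and the angles increase within one turn, the counterclockwise angle
`θ j` from `B 0` to `B j` satisfies `θ j < π + 2 (j-1) π / N` whenever
`2 ≤ j` and `j - 1 < N/2`. -/
theorem balanced_angle_bound (N j : ℕ) (hj : 2 ≤ j)
    (hjN : (j : ℝ) - 1 < (N : ℝ) / 2) (hjltN : j < N)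
    (θ : Fin N → ℝ)
    (hθ0 : θ ⟨0, by omega⟩ = 0)
    (hmono : StrictMono θ)
    (hrange : ∀ i, θ i ∈ Set.Ico (0 : ℝ) (2 * π))
    (hcos : ∑ i, Real.cos (θ i) = 0)
    (hsin : ∑ i, Real.sin (θ i) = 0) :
    θ ⟨j, hjltN⟩ < π + 2 * ((j : ℝ) - 1) * π / (N : ℝ) := by
  set T := θ ⟨j, hjltN⟩
  set m : ℝ := (j : ℝ) - 1
  by_contra! hT
  have hm : 1 ≤ m := by
    have : (2 : ℝ) ≤ j := by exact_mod_cast hj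
    linarith
  have hN : (0 : ℝ) < N := by linarith
  have hheight : cos (T / 2) ≤ -(2 * m / N) :=
    cos_half_le_neg_of_pi_add_mul_pi_le (div_nonneg (by linarith) hN.le)
      (by rwa [div_mul_eq_mul_div]) (hrange _).2.le
  set s : Finset (Fin N) := Ioo ⟨0, by omega⟩ ⟨j, hjltN⟩
  have hfar : ∀ i ∉ s, sin (θ i + (π - T) / 2) ≤ cos (T / 2) := by
    intro i hi
    simp only [s, mem_Ioo, not_and_or, not_lt, Fin.le_def] at hi
    rcases hi with hi | hi
    · rw [show i = ⟨0, by omega⟩ from Fin.ext (Nat.le_zero.mp hi), hθ0, zero_add,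
        show (π - T) / 2 = π / 2 - T / 2 by ring, sin_pi_div_two_sub]
    · exact sin_add_pi_sub_div_two_le_cos_half (hrange _).1 (hmono.monotone hi) (hrange i).2.le
  have hs : (#s : ℝ) = m := by
    simp only [s, Fin.card_Ioo]
    rw [Nat.cast_sub (by omega)]
    simp [m]
  have hsum := sum_le_card_mul_add_card_sub_mul s _ (fun i _ => sin_le_one _) hfar
  rw [sum_sin_add_eq_zero _ _ _ hcos hsin, Fintype.card_fin, hs, mul_one] at hsum
  exact (add_sub_mul_neg_of_le_neg_two_mul_div (by linarith) (by linarith) hheight).not_ge hsum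
end

section
/- Let A be a regular N-sunburst (its N unit vectors are the N-th roots of unity up to rotation) and let B be a balanced N-sunburst (N unit vectors summing to zero, in cyclic order), with N ≥ 3. Then there exists a rotation ρ about the origin such that the pair (A, ρ(B)) is an oriented weave: for every k, the vector ρ(B)_{2k} lies in the open sector bounded by A_{2k+1} and −A_{2k−1}. -/
open Real

/-- Rotation of the plane by angle `α`. -/
noncomputable def rot (α : ℝ) (v : ℝ × ℝ) : ℝ × ℝ :=
  (Real.cos α * v.1 - Real.sin α * v.2, Real.sin α * v.1 + Real.cos α * v.2)


/-- Positive-combination membership of a unit vector in an open sector of width `< π`. -/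
lemma sector_mem (θ1 θ2 ψ : ℝ) (h1 : θ1 < ψ) (h2 : ψ < θ2) (h3 : θ2 - θ1 < π) :
    ∃ s t : ℝ, 0 < s ∧ 0 < t ∧
      (Real.cos ψ, Real.sin ψ) =
        s • ((Real.cos θ1, Real.sin θ1) : ℝ × ℝ) + t • (Real.cos θ2, Real.sin θ2) := by
  have hD : 0 < Real.sin (θ2 - θ1) :=
    Real.sin_pos_of_pos_of_lt_pi (by linarith) h3
  have hs : 0 < Real.sin (θ2 - ψ) :=
    Real.sin_pos_of_pos_of_lt_pi (by linarith) (by linarith)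
  have ht : 0 < Real.sin (ψ - θ1) :=
    Real.sin_pos_of_pos_of_lt_pi (by linarith) (by linarith)
  refine ⟨Real.sin (θ2 - ψ) / Real.sin (θ2 - θ1),
    Real.sin (ψ - θ1) / Real.sin (θ2 - θ1), div_pos hs hD, div_pos ht hD, ?_⟩
  have hD' : Real.sin (θ2 - θ1) ≠ 0 := ne_of_gt hD
  simp only [Prod.smul_mk, smul_eq_mul, Prod.mk_add_mk, Prod.mk.injEq]
  constructor
  · rw [div_mul_eq_mul_div, div_mul_eq_mul_div, ← add_div, eq_div_iff hD']
    rw [Real.sin_sub, Real.sin_sub, Real.sin_sub]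
    ring
  · rw [div_mul_eq_mul_div, div_mul_eq_mul_div, ← add_div, eq_div_iff hD']
    rw [Real.sin_sub, Real.sin_sub, Real.sin_sub]
    ring

/-- The projection/counting contradiction: if `N` unit directions `c i` have
angle-cosines summing to zero about `θ`, but all except `m - 1` of them lie within
angular distance `π/2 - π(m-1)/N` of `θ`, with `2 ≤ m` and `2(m-1) < N`, we
get a contradiction. -/
lemma key_ineq (N m : ℕ) (hN : 3 ≤ N) (hm2 : 2 ≤ m) (hmN : 2 * (m - 1) < N)
    (c : Fin N → ℝ) (S : Finset (Fin N)) (hcard : S.card = m - 1) (θ : ℝ)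
    (hθ : ∀ i, i ∉ S → |c i - θ| ≤ π / 2 - π * ((m : ℝ) - 1) / N)
    (hsum : ∑ i, Real.cos (c i - θ) = 0) : False := by
  have hN0 : (0:ℝ) < N := by exact_mod_cast Nat.lt_of_lt_of_le (by norm_num) hN
  have hm2R : (2:ℝ) ≤ (m:ℝ) := by exact_mod_cast hm2
  set a : ℝ := (m:ℝ) - 1 with ha
  have haR : 1 ≤ a := by simp [ha]; linarith
  have hNa : 2 * a < N := by
    have : ((2 * (m - 1) : ℕ) : ℝ) < N := by exact_mod_cast hmN
    rw [Nat.cast_mul, Nat.cast_sub (by omega : 1 ≤ m)] at this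
    simp only [ha]
    push_cast at this ⊢
    linarith
  set T := π * a / N with hT
  have hT0 : 0 < T := by
    apply div_pos (mul_pos Real.pi_pos (by linarith)) hN0
  have hT2 : T ≤ π / 2 := by
    rw [hT, div_le_iff₀ hN0]
    nlinarith [Real.pi_pos]
  have hX : 2 * a / (N:ℝ) ≤ Real.sin T := by
    have h := Real.mul_le_sin hT0.le hT2
    have e : 2 / π * T = 2 * a / N := by
      rw [hT]; field_simp
    linarith [h, e.symm.le, e.le]
  have hlb : ∀ i, i ∉ S → Real.sin T ≤ Real.cos (c i - θ) := by
    intro i hi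
    have h1 := hθ i hi
    have h2 : Real.cos (π / 2 - T) ≤ Real.cos |c i - θ| :=
      Real.cos_le_cos_of_nonneg_of_le_pi (abs_nonneg _)
        (by linarith [Real.pi_pos]) (by linarith)
    rw [Real.cos_pi_div_two_sub, Real.cos_abs] at h2
    exact h2
  have h3 : (Sᶜ.card : ℝ) * Real.sin T ≤ ∑ i ∈ Sᶜ, Real.cos (c i - θ) := by
    have := Finset.card_nsmul_le_sum Sᶜ (fun i => Real.cos (c i - θ)) (Real.sin T)
      (fun i hi => hlb i (Finset.mem_compl.mp hi))
    simpa [nsmul_eq_mul] using this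
  have h4 : (S.card : ℝ) * (-1) ≤ ∑ i ∈ S, Real.cos (c i - θ) := by
    have := Finset.card_nsmul_le_sum S (fun i => Real.cos (c i - θ)) (-1)
      (fun i _ => Real.neg_one_le_cos _)
    simpa [nsmul_eq_mul] using this
  have hsplit : ∑ i ∈ S, Real.cos (c i - θ) + ∑ i ∈ Sᶜ, Real.cos (c i - θ) = 0 := by
    rw [Finset.sum_add_sum_compl]; exact hsum
  have hcc : (Sᶜ.card : ℝ) = (N:ℝ) - a := by
    rw [Finset.card_compl, hcard, Fintype.card_fin]
    have h5 : m - 1 ≤ N := by omega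
    rw [Nat.cast_sub h5, Nat.cast_sub (by omega : 1 ≤ m)]
    simp [ha]
  have hsc : (S.card : ℝ) = a := by
    rw [hcard, Nat.cast_sub (by omega : 1 ≤ m)]; simp [ha]
  rw [hcc] at h3
  rw [hsc] at h4
  -- now: (N - a) * sin T ≤ a, 2a/N ≤ sin T, contradiction
  set X := Real.sin T with hXdef
  have hP1 : (N - a) * X ≤ a := by linarith
  have hXN : 2 * a ≤ X * N := by
    rw [div_le_iff₀ hN0] at hX; linarith
  have hXpos : 0 < X := by
    by_contra hx
    push_neg at hx
    have : X * N ≤ 0 := mul_nonpos_iff.mpr (Or.inr ⟨hx, hN0.le⟩)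
    linarith
  nlinarith [mul_pos hXpos (show (0:ℝ) < N - 2 * a by linarith)]

/-- If `A` is a regular `N`-sunburst and `B` is a balanced `N`-sunburst
(unit vectors listed counterclockwise within one turn, with consecutive
angular gaps less than `π`, summing to zero), then some rotation `ρ` of `B`
makes `(A, ρ B)` an oriented weave: each rotated vector of `B` lies strictly
inside the open sector spanned by the corresponding `A (k+1)` and `-(A k)`. -/
theorem regular_balanced_oriented_weave (N : ℕ) (hN : 3 ≤ N)
    (A B : Fin N → ℝ × ℝ)
    -- `A` is regular:
    (hA : ∃ φ : ℝ, ∀ k : Fin N,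
      A k = (Real.cos (φ + 2 * π * k / N), Real.sin (φ + 2 * π * k / N)))
    -- `B` is a balanced sunburst, with angular coordinates `β`:
    (β : Fin N → ℝ)
    (hB : ∀ k : Fin N, B k = (Real.cos (β k), Real.sin (β k)))
    (hmono : StrictMono β)
    (hgap : ∀ k : Fin N, ∀ h : k.val + 1 < N, β ⟨k.val + 1, h⟩ - β k < π)
    (hwrap : β ⟨0, by omega⟩ + 2 * π - β ⟨N - 1, by omega⟩ < π)
    (htot : β ⟨N - 1, by omega⟩ - β ⟨0, by omega⟩ < 2 * π)
    (hbal : ∑ k, B k = 0) :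
    ∃ α : ℝ, ∀ k : Fin N, ∃ s t : ℝ, 0 < s ∧ 0 < t ∧
      rot α (B k) =
        s • A ⟨(k.val + 1) % N, Nat.mod_lt _ (by omega)⟩ + t • (-(A k)) := by
  obtain ⟨φ, hφ⟩ := hA
  have hπ := Real.pi_pos
  have hN0 : (0:ℝ) < N := by exact_mod_cast Nat.lt_of_lt_of_le (by norm_num) hN
  have hN3 : (3:ℝ) ≤ N := by exact_mod_cast hN
  have h2N : 0 < 2 * π / N := by positivity
  have hsec : 2 * π / N < π := by
    rw [div_lt_iff₀ hN0]; nlinarith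
  -- component sums vanish
  have hc0 : ∑ i, Real.cos (β i) = 0 := by
    have h := congrArg Prod.fst hbal
    rw [Prod.fst_sum] at h
    simpa [hB] using h
  have hs0 : ∑ i, Real.sin (β i) = 0 := by
    have h := congrArg Prod.snd hbal
    rw [Prod.snd_sum] at h
    simpa [hB] using h
  have hzero : ∀ θ : ℝ, ∑ i, Real.cos (β i - θ) = 0 := by
    intro θ
    simp only [Real.cos_sub]
    rw [Finset.sum_add_distrib, ← Finset.sum_mul, ← Finset.sum_mul, hc0, hs0]
    ring
  have hmin : ∀ i : Fin N, β ⟨0, by omega⟩ ≤ β i := by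
    intro i; exact hmono.monotone (by simp [Fin.le_def])
  have hmax : ∀ i : Fin N, β i ≤ β ⟨N - 1, by omega⟩ := by
    intro i
    exact hmono.monotone (by rw [Fin.le_def]; have := i.isLt; simp; omega)
  -- the key inequality
  have hkey : ∀ j k : Fin N,
      (β j - 2 * π * (j.val:ℝ) / N) - (β k - 2 * π * (k.val:ℝ) / N) < π - 2 * π / N := by
    intro j k
    rcases Nat.lt_trichotomy k.val j.val with hkj | hkj | hkj
    · -- k < j : the arc from k to j
      by_contra hcon
      push_neg at hcon
      obtain ⟨m, hm⟩ : ∃ m : ℕ, m = j.val - k.val := ⟨_, rfl⟩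
      have hjN := j.isLt
      have hm1 : 1 ≤ m := by omega
      have hmr : ((m:ℕ):ℝ) = (j.val:ℝ) - (k.val:ℝ) := by
        rw [hm, Nat.cast_sub hkj.le]
      obtain ⟨T, hT⟩ : ∃ T : ℝ, T = π * ((m:ℝ) - 1) / N := ⟨_, rfl⟩
      have hS : β j - β k ≥ π + 2 * T := by
        have e : 2 * T = 2 * π * (j.val:ℝ) / N - 2 * π * (k.val:ℝ) / N - 2 * π / N := by
          rw [hT, hmr]; ring
        linarith [e]
      rcases eq_or_lt_of_le hm1 with h1 | hm2
      · -- m = 1 : single gap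
        have hj : j = ⟨k.val + 1, by omega⟩ := Fin.ext (show j.val = k.val + 1 by omega)
        have hg := hgap k (by omega)
        have ej : β j = β ⟨k.val + 1, by omega⟩ := by rw [congrArg β hj]
        have hT0 : T = 0 := by rw [hT, ← h1]; norm_num
        linarith [hg, ej]
      rcases le_or_gt N (2 * (m - 1)) with hbig | hsmall
      · -- big arc: trivially impossible
        have hc2 : (N:ℝ) ≤ 2 * ((m:ℝ) - 1) := by
          have : ((2 * (m - 1) : ℕ) : ℝ) ≥ N := by exact_mod_cast hbig
          rw [Nat.cast_mul, Nat.cast_sub hm1] at this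
          push_cast at this
          linarith
        have h2T : π ≤ 2 * T := by
          have e2 : 2 * T = (2 * π * ((m:ℝ) - 1)) / N := by rw [hT]; ring
          rw [e2, le_div_iff₀ hN0]
          nlinarith
        linarith [hmax j, hmin k, htot, hS, h2T]
      · -- main case: projection argument
        refine key_ineq N m hN (by omega) hsmall
          (fun i => if i ≤ k then β i + 2 * π else β i) (Finset.Ioo k j) ?_
          ((β j + β k) / 2 + π) ?_ ?_
        · simp only [Fin.card_Ioo]; omega
        · intro i hi
          rw [Finset.mem_Ioo, not_and, not_lt] at hi
          rw [← hT]
          by_cases hik : i ≤ k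
          · simp only [if_pos hik]
            have h1 : β i ≤ β k := hmono.monotone hik
            have h2 := hmin i
            have h3 := hmax j
            rw [abs_le]
            constructor <;> linarith [htot, hS]
          · simp only [if_neg hik]
            have hji : j ≤ i := hi (lt_of_not_ge hik)
            have h1 : β j ≤ β i := hmono.monotone hji
            have h2 := hmax i
            have h3 := hmin k
            rw [abs_le]
            constructor <;> linarith [htot, hS]
        · refine Eq.trans ?_ (hzero ((β j + β k) / 2 + π))
          refine Finset.sum_congr rfl fun i _ => ?_
          by_cases hik : i ≤ k
          · simp only [if_pos hik]
            rw [show β i + 2 * π - ((β j + β k) / 2 + π)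
                = (β i - ((β j + β k) / 2 + π)) + 2 * π by ring,
              Real.cos_add_two_pi]
          · simp only [if_neg hik]
    · -- j = k
      have : j = k := Fin.ext hkj.symm
      rw [this, sub_self]
      linarith
    · -- j < k : the wrapped arc from k to j
      by_contra hcon
      push_neg at hcon
      have hkN := k.isLt
      have hjN := j.isLt
      obtain ⟨m, hm⟩ : ∃ m : ℕ, m = N - (k.val - j.val) := ⟨_, rfl⟩
      have hm1 : 1 ≤ m := by omega
      have hmr : ((m:ℕ):ℝ) = (N:ℝ) - ((k.val:ℝ) - (j.val:ℝ)) := by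
        rw [hm, Nat.cast_sub (by omega), Nat.cast_sub hkj.le]
      obtain ⟨T, hT⟩ : ∃ T : ℝ, T = π * ((m:ℝ) - 1) / N := ⟨_, rfl⟩
      have hS : β j + 2 * π - β k ≥ π + 2 * T := by
        have e : 2 * T = 2 * π - 2 * π * (k.val:ℝ) / N + 2 * π * (j.val:ℝ) / N
            - 2 * π / N := by
          rw [hT, hmr]; field_simp; ring
        linarith [e]
      rcases eq_or_lt_of_le hm1 with h1 | hm2
      · -- m = 1 : the wrap gap
        have hkv : k.val = N - 1 ∧ j.val = 0 := by omega
        have ek1 : β ⟨N - 1, by omega⟩ ≤ β k :=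
          hmono.monotone (by rw [Fin.le_def]; omega)
        have ej1 : β j ≤ β ⟨0, by omega⟩ :=
          hmono.monotone (by rw [Fin.le_def]; omega)
        have hT0 : T = 0 := by rw [hT, ← h1]; norm_num
        linarith [hwrap, ek1, ej1]
      rcases le_or_gt N (2 * (m - 1)) with hbig | hsmall
      · have hc2 : (N:ℝ) ≤ 2 * ((m:ℝ) - 1) := by
          have : ((2 * (m - 1) : ℕ) : ℝ) ≥ N := by exact_mod_cast hbig
          rw [Nat.cast_mul, Nat.cast_sub hm1] at this
          push_cast at this
          linarith
        have h2T : π ≤ 2 * T := by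
          have e2 : 2 * T = (2 * π * ((m:ℝ) - 1)) / N := by rw [hT]; ring
          rw [e2, le_div_iff₀ hN0]
          nlinarith
        have hjk : β j < β k := hmono (by rwa [Fin.lt_def])
        linarith
      · refine key_ineq N m hN (by omega) hsmall β ((Finset.Icc j k)ᶜ) ?_
          ((β j + β k) / 2) ?_ (hzero _)
        · simp only [Finset.card_compl, Fin.card_Icc, Fintype.card_fin]; omega
        · intro i hi
          rw [Finset.notMem_compl, Finset.mem_Icc] at hi
          have h1 : β j ≤ β i := hmono.monotone hi.1
          have h2 : β i ≤ β k := hmono.monotone hi.2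
          rw [← hT, abs_le]
          constructor <;> linarith [hS]
  -- choose the rotation angle
  obtain ⟨kM, -, hkM⟩ := Finset.exists_max_image Finset.univ
    (fun i : Fin N => β i - 2 * π * (i.val:ℝ) / N) ⟨⟨0, by omega⟩, Finset.mem_univ _⟩
  obtain ⟨km, -, hkm⟩ := Finset.exists_min_image Finset.univ
    (fun i : Fin N => β i - 2 * π * (i.val:ℝ) / N) ⟨⟨0, by omega⟩, Finset.mem_univ _⟩
  set α : ℝ := φ + π / 2 + π / (N:ℝ)
    - ((β kM - 2 * π * (kM.val:ℝ) / N) + (β km - 2 * π * (km.val:ℝ) / N)) / 2 with hα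
  refine ⟨α, fun k => ?_⟩
  have hMk := hkM k (Finset.mem_univ k)
  have hmk := hkm k (Finset.mem_univ k)
  have hspan := hkey kM km
  have ediv : 2 * π * ((k.val:ℝ) + 1) / N = 2 * π * (k.val:ℝ) / N + 2 * (π / (N:ℝ)) := by
    ring
  have e2 : 2 * π / (N:ℝ) = 2 * (π / (N:ℝ)) := by ring
  have hlo : φ + 2 * π * ((k.val:ℝ) + 1) / N < α + β k := by
    rw [hα]; linarith [hsec, ediv, e2, hspan, hmk]
  have hhi : α + β k < φ + 2 * π * (k.val:ℝ) / N + π := by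
    rw [hα]; linarith [hsec, ediv, e2, hspan, hMk]
  have hwid : (φ + 2 * π * (k.val:ℝ) / N + π) - (φ + 2 * π * ((k.val:ℝ) + 1) / N) < π := by
    have e : (φ + 2 * π * (k.val:ℝ) / N + π) - (φ + 2 * π * ((k.val:ℝ) + 1) / N)
        = π - 2 * π / N := by ring
    linarith [e]
  obtain ⟨s, t, hs, ht, hst⟩ := sector_mem (φ + 2 * π * ((k.val:ℝ) + 1) / N)
    (φ + 2 * π * (k.val:ℝ) / N + π) (α + β k) hlo hhi hwid
  have hA1 : A ⟨(k.val + 1) % N, Nat.mod_lt _ (by omega)⟩ =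
      (Real.cos (φ + 2 * π * ((k.val:ℝ) + 1) / N),
       Real.sin (φ + 2 * π * ((k.val:ℝ) + 1) / N)) := by
    rw [hφ]
    by_cases hk : k.val + 1 < N
    · have hv : ((((k.val + 1) % N : ℕ)) : ℝ) = (k.val : ℝ) + 1 := by
        rw [Nat.mod_eq_of_lt hk]; push_cast; ring
      have : ((⟨(k.val + 1) % N, Nat.mod_lt _ (by omega)⟩ : Fin N) : ℝ)
          = (k.val : ℝ) + 1 := hv
      rw [this]
    · have hkv : k.val + 1 = N := by have := k.isLt; omega
      have hv : ((⟨(k.val + 1) % N, Nat.mod_lt _ (by omega)⟩ : Fin N) : ℝ) = 0 := by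
        simp [hkv, Nat.mod_self]
      have hkvR : (k.val:ℝ) + 1 = N := by exact_mod_cast hkv
      have hang : φ + 2 * π * ((k.val:ℝ) + 1) / N = (φ + 2 * π * (0:ℝ) / N) + 2 * π := by
        rw [hkvR]; field_simp; ring
      rw [hv, hang, Real.cos_add_two_pi, Real.sin_add_two_pi]
  have hA2 : -(A k) = (Real.cos (φ + 2 * π * (k.val:ℝ) / N + π),
      Real.sin (φ + 2 * π * (k.val:ℝ) / N + π)) := by
    rw [hφ k, Real.cos_add_pi, Real.sin_add_pi, Prod.neg_mk]
  have hrot : rot α (B k) = (Real.cos (α + β k), Real.sin (α + β k)) := by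
    rw [hB k]
    simp only [rot, Real.cos_add, Real.sin_add]
  exact ⟨s, t, hs, ht, by rw [hrot, hA1, hA2]; exact hst⟩
end

section
/- If (A,B) is an oriented weave of N-sunbursts (N ≥ 3), then (B, −A) is also an oriented weave, where −A denotes the sunburst obtained by negating all vectors of A. In particular, (B, A) is a weave: for all k, the line through B's relevant vector does not lie in the closed acute sector determined by the corresponding pair of A's vectors. -/
/-!
Everything is read off the signs of the planar cross product. For `cross u w > 0`, a vector
lies strictly inside the sector spanned by `u` and `w` exactly when `cross u v > 0` and
`cross v w > 0`. Applied to `B k` in the sector of `A (k+1)` and `-A k`, this gives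
`cross (A (k+1)) (B k) > 0` and `cross (B (k+1)) (-A (k+1)) > 0`, which are precisely the two
sign conditions placing `-A (k+1)` strictly inside the sector of `B (k+1)` and `-B k`; the
same two inequalities keep `±A (k+1)` out of the closed sector of `B k` and `B (k+1)`.
-/

namespace Plane

def cross (u v : ℝ × ℝ) : ℝ := u.1 * v.2 - u.2 * v.1

def openCone (u w : ℝ × ℝ) : Set (ℝ × ℝ) :=
  {v | ∃ s t : ℝ, 0 < s ∧ 0 < t ∧ v = s • u + t • w}

def closedCone (u w : ℝ × ℝ) : Set (ℝ × ℝ) :=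
  {v | ∃ s t : ℝ, 0 ≤ s ∧ 0 ≤ t ∧ v = s • u + t • w}

section Cross

variable (u v w : ℝ × ℝ)

@[simp]
lemma cross_neg_left : cross (-u) v = -cross u v := by
  simp only [cross, Prod.fst_neg, Prod.snd_neg]; ring

@[simp]
lemma cross_neg_right : cross u (-v) = -cross u v := by
  simp only [cross, Prod.fst_neg, Prod.snd_neg]; ring

lemma cross_anticomm : -cross u v = cross v u := by
  simp only [cross]; ring

lemma cross_neg_right_comm : cross u (-v) = cross v u := by
  rw [cross_neg_right, cross_anticomm]

lemma cross_smul_add_smul_right (s t : ℝ) :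
    cross u (s • v + t • w) = s * cross u v + t * cross u w := by
  simp only [cross, Prod.fst_add, Prod.snd_add, Prod.smul_fst, Prod.smul_snd, smul_eq_mul]; ring

lemma cross_smul_add_smul_left (s t : ℝ) :
    cross (s • u + t • v) w = s * cross u w + t * cross v w := by
  simp only [cross, Prod.fst_add, Prod.snd_add, Prod.smul_fst, Prod.smul_snd, smul_eq_mul]; ring

lemma cross_self : cross u u = 0 := by
  simp only [cross]; ring

/-- Cramer's rule in the plane. -/
lemma eq_cross_div_smul_add (huw : cross u w ≠ 0) :
    v = (cross v w / cross u w) • u + (cross u v / cross u w) • w := by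
  ext <;> simp only [Prod.fst_add, Prod.snd_add, Prod.smul_fst, Prod.smul_snd, smul_eq_mul] <;>
    rw [div_mul_eq_mul_div, div_mul_eq_mul_div, ← add_div, eq_div_iff huw] <;> simp only [cross] <;>
    ring

end Cross

section Cone

variable {u v w : ℝ × ℝ}

lemma cross_nonneg_of_mem_closedCone (huw : 0 ≤ cross u w) (hv : v ∈ closedCone u w) :
    0 ≤ cross u v ∧ 0 ≤ cross v w := by
  obtain ⟨s, t, hs, ht, rfl⟩ := hv
  simp only [cross_smul_add_smul_right, cross_smul_add_smul_left, cross_self]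
  constructor <;> positivity

lemma mem_openCone_iff_cross_pos (huw : 0 < cross u w) :
    v ∈ openCone u w ↔ 0 < cross u v ∧ 0 < cross v w := by
  constructor
  · rintro ⟨s, t, hs, ht, rfl⟩
    simp only [cross_smul_add_smul_right, cross_smul_add_smul_left, cross_self]
    constructor <;> positivity
  · rintro ⟨huv, hvw⟩
    exact ⟨_, _, div_pos hvw huw, div_pos huv huw, eq_cross_div_smul_add u v w huw.ne'⟩

end Cone

end Plane

/-- If `(A, B)` is an oriented weave of `N`-sunbursts, then `(B, -A)` (with the
appropriate index shift) is also an oriented weave, and in particular `(B, A)`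
is a weave: the line spanned by each relevant vector of `A` does not lie in the
closed sector bounded by the corresponding pair of consecutive vectors of `B`. -/
theorem oriented_weave_swap (N : ℕ) (A B : Fin N → ℝ × ℝ)
    (nxt : Fin N → Fin N)
    (hAorder : ∀ k, 0 < (A k).1 * (A (nxt k)).2 - (A k).2 * (A (nxt k)).1)
    (hBorder : ∀ k, 0 < (B k).1 * (B (nxt k)).2 - (B k).2 * (B (nxt k)).1)
    -- `(A, B)` is an oriented weave:
    (hweave : ∀ k : Fin N, ∃ s t : ℝ, 0 < s ∧ 0 < t ∧
      B k = s • A (nxt k) + t • (-(A k))) :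
    -- `(B, -A)` is an oriented weave:
    (∀ k : Fin N, ∃ s t : ℝ, 0 < s ∧ 0 < t ∧
      -(A (nxt k)) = s • B (nxt k) + t • (-(B k))) ∧
    -- in particular `(B, A)` is a weave:
    (∀ k : Fin N,
      (¬ ∃ s t : ℝ, 0 ≤ s ∧ 0 ≤ t ∧ A (nxt k) = s • B k + t • B (nxt k)) ∧
      (¬ ∃ s t : ℝ, 0 ≤ s ∧ 0 ≤ t ∧ -(A (nxt k)) = s • B k + t • B (nxt k))) := by
  open Plane in
  have hB : ∀ k, 0 < cross (A (nxt k)) (B k) ∧ 0 < cross (B k) (-A k) := fun k =>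
    (mem_openCone_iff_cross_pos (by rw [cross_neg_right_comm]; exact hAorder k)).1 (hweave k)
  refine ⟨fun k => ?_, fun k => ⟨fun hA => ?_, fun hA => ?_⟩⟩
  · refine (mem_openCone_iff_cross_pos (by rw [cross_neg_right_comm]; exact hBorder k)).2 ⟨?_, ?_⟩
    · exact (hB (nxt k)).2
    · simpa using (hB k).1
  · have := (cross_nonneg_of_mem_closedCone (hBorder k).le hA).1
    linarith [(hB k).1, cross_anticomm (A (nxt k)) (B k)]
  · have := (cross_nonneg_of_mem_closedCone (hBorder k).le hA).2
    linarith [(hB (nxt k)).2, cross_neg_right_comm (B (nxt k)) (A (nxt k)),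
      cross_neg_left (A (nxt k)) (B (nxt k))]
end

section
/- In the line-coordinate model of equiangular pentagons, the butterfly move B_k is a linear involution of the coordinate space ℝ^N that preserves signed area; consequently, on the signature (1,2) quadratic form Q given by signed area, B_k is an element of the orthogonal group O(Q) of order 2 whose fixed-point set is a codimension-one linear subspace, i.e., B_k acts as a reflection. -/
open Real

namespace ButterflyPentagon

/-- Unit normal of the `j`-th family of parallel lines (directions are the
fifth roots of unity). -/
noncomputable def nrm (j : Fin 5) : ℝ × ℝ :=
  (Real.cos (2 * π * j / 5), Real.sin (2 * π * j / 5))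

/-- The line of the `j`-th family with offset `x j` is
`{p | ⟪p, nrm j⟫ = x j}`.  `vert x j m` is the intersection point of the
lines `j` and `m` of the configuration with offsets `x`. -/
noncomputable def vert (x : Fin 5 → ℝ) (j m : Fin 5) : ℝ × ℝ :=
  ((x j * (nrm m).2 - x m * (nrm j).2) /
      ((nrm j).1 * (nrm m).2 - (nrm j).2 * (nrm m).1),
   ((nrm j).1 * x m - (nrm m).1 * x j) /
      ((nrm j).1 * (nrm m).2 - (nrm j).2 * (nrm m).1))

/-- The `j`-th vertex of the equiangular pentagon with line offsets `x`. -/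
noncomputable def vtx (x : Fin 5 → ℝ) (j : Fin 5) : ℝ × ℝ :=
  vert x j (j + 1)

/-- Signed area of the equiangular pentagon with line offsets `x`. -/
noncomputable def area (x : Fin 5 → ℝ) : ℝ :=
  (1 / 2) * ∑ j : Fin 5,
    ((vtx x j).1 * (vtx x (j + 1)).2 - (vtx x j).2 * (vtx x (j + 1)).1)

/-- The butterfly move `B k`: replace the line `ℓ k` by its point reflection
through the vertex `ℓ (k-1) ∩ ℓ (k+1)`, keeping the other lines. -/
noncomputable def butterfly (k : Fin 5) (x : Fin 5 → ℝ) : Fin 5 → ℝ :=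
  Function.update x k
    (2 * ((vert x (k - 1) (k + 1)).1 * (nrm k).1 +
          (vert x (k - 1) (k + 1)).2 * (nrm k).2) - x k)

local notation "c" => Real.cos (2*π/5)
local notation "s" => Real.sin (2*π/5)

lemma cos25 : c = (Real.sqrt 5 - 1)/4 := by
  have h2 : (2*π/5 : ℝ) = 2*(π/5) := by ring
  rw [h2, Real.cos_two_mul, Real.cos_pi_div_five]
  nlinarith [Real.sq_sqrt (by norm_num : (5:ℝ) ≥ 0)]

lemma hc : 4*c^2 + 2*c - 1 = 0 := by
  rw [cos25]; nlinarith [Real.sq_sqrt (by norm_num : (5:ℝ) ≥ 0)]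

lemma hg : Real.sqrt 5 = 4*c + 1 := by rw [cos25]; ring

lemma hcpos : 0 < c := by
  rw [cos25]
  nlinarith [Real.sq_sqrt (by norm_num : (5:ℝ) ≥ 0), Real.sqrt_nonneg 5]

lemma hspos : 0 < s := by
  apply Real.sin_pos_of_pos_of_lt_pi <;> nlinarith [Real.pi_pos]

lemma nrm0 : nrm 0 = (1, 0) := by
  have h : ((0:Fin 5):ℝ) = 0 := by norm_num
  simp only [nrm, h]; norm_num
lemma nrm1 : nrm 1 = (c, s) := by
  have h : ((1:Fin 5):ℝ) = 1 := by norm_num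
  simp only [nrm, h, Prod.mk.injEq]
  constructor <;> (congr 1; ring)
lemma nrm2 : nrm 2 = (2*c^2 - 1, 2*s*c) := by
  have h : ((2:Fin 5):ℝ) = 2 := by norm_num
  simp only [nrm, h, Prod.mk.injEq]
  rw [show (2*π*2/5:ℝ) = 2*(2*π/5) by ring, Real.cos_two_mul, Real.sin_two_mul]
  constructor <;> ring
lemma nrm3 : nrm 3 = (2*c^2 - 1, -(2*s*c)) := by
  have h : ((3:Fin 5):ℝ) = 3 := by norm_num [show ((3:Fin 5):ℕ) = 3 from rfl]
  simp only [nrm, h, Prod.mk.injEq]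
  rw [show (2*π*3/5:ℝ) = 2*π - 2*(2*π/5) by ring, Real.cos_sub, Real.sin_sub,
    Real.cos_two_pi, Real.sin_two_pi, Real.cos_two_mul, Real.sin_two_mul]
  constructor <;> ring
lemma nrm4 : nrm 4 = (c, -s) := by
  have h : ((4:Fin 5):ℝ) = 4 := by norm_num [show ((4:Fin 5):ℕ) = 4 from rfl]
  simp only [nrm, h, Prod.mk.injEq]
  rw [show (2*π*4/5:ℝ) = 2*π - 2*π/5 by ring, Real.cos_sub, Real.sin_sub,
    Real.cos_two_pi, Real.sin_two_pi]
  constructor <;> ring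

lemma vtx0 (x : Fin 5 → ℝ) : vtx x 0 = (x 0, (x 1 - c*x 0)/s) := by
  simp only [vtx, vert, show (0:Fin 5)+1 = 1 from rfl, nrm0, nrm1, Prod.mk.injEq]
  constructor
  · rw [div_eq_iff (by simpa using hspos.ne')]; ring
  · congr 1 <;> ring
lemma vtx1 (x : Fin 5 → ℝ) : vtx x 1 = (2*c*x 1 - x 2, (c*x 2 - (2*c^2-1)*x 1)/s) := by
  simp only [vtx, vert, show (1:Fin 5)+1 = 2 from rfl, nrm1, nrm2, Prod.mk.injEq]
  have hs := hspos.ne'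
  constructor
  · rw [div_eq_iff (by nlinarith [hspos, hcpos] : c*(2*s*c) - s*(2*c^2-1) ≠ 0)]; ring
  · rw [div_eq_div_iff (by nlinarith [hspos, hcpos] : c*(2*s*c) - s*(2*c^2-1) ≠ 0) hs]; ring
lemma vtx2 (x : Fin 5 → ℝ) : vtx x 2 = (-(2*c)*(x 2 + x 3), (x 2 - x 3)/(4*s*c)) := by
  have h2c : (2*c^2-1) = -(1+2*c)/2 := by linarith [hc]
  have hD : (2*c^2-1)*(-(2*s*c)) - 2*s*c*(2*c^2-1) ≠ 0 := by
    rw [h2c]; nlinarith [hspos, hcpos]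
  simp only [vtx, vert, show (2:Fin 5)+1 = 3 from rfl, nrm2, nrm3, Prod.mk.injEq]
  constructor
  · rw [div_eq_iff hD]; linear_combination (-2*s*(x 2 + x 3)*(2*c^2 - c)) * hc
  · rw [div_eq_div_iff hD (by nlinarith [hspos, hcpos] : (4*s*c:ℝ) ≠ 0)]; ring
lemma vtx3 (x : Fin 5 → ℝ) : vtx x 3 = (2*c*x 4 - x 3, ((2*c^2-1)*x 4 - c*x 3)/s) := by
  have hD : (2*c^2-1)*(-s) - (-(2*s*c))*c ≠ 0 := by
    have : (2*c^2-1)*(-s) - (-(2*s*c))*c = s := by ring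
    rw [this]; exact hspos.ne'
  simp only [vtx, vert, show (3:Fin 5)+1 = 4 from rfl, nrm3, nrm4, Prod.mk.injEq]
  constructor
  · rw [div_eq_iff hD]; ring
  · rw [div_eq_div_iff hD hspos.ne']; ring
lemma vtx4 (x : Fin 5 → ℝ) : vtx x 4 = (x 0, (c*x 0 - x 4)/s) := by
  simp only [vtx, vert, show (4:Fin 5)+1 = 0 from rfl, nrm4, nrm0, Prod.mk.injEq]
  constructor
  · rw [div_eq_iff (by simpa using hspos.ne' : c*0 - -s*1 ≠ 0)]; ring
  · congr 1 <;> ring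

lemma area_formula (x : Fin 5 → ℝ) :
    area x = s/5 * ((2 - 12*c) * (x 0^2 + x 1^2 + x 2^2 + x 3^2 + x 4^2)
      + (8 - 8*c) * (x 0*x 1 + x 1*x 2 + x 2*x 3 + x 3*x 4 + x 4*x 0)) := by
  have hs := hspos.ne'
  have hcn := hcpos.ne'
  have hs2 : s^2 = 1 - c^2 := by rw [Real.sin_sq]
  simp only [area, Fin.sum_univ_five, show (0:Fin 5)+1 = 1 from rfl,
    show (1:Fin 5)+1 = 2 from rfl, show (2:Fin 5)+1 = 3 from rfl,
    show (3:Fin 5)+1 = 4 from rfl, show (4:Fin 5)+1 = 0 from rfl,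
    vtx0, vtx1, vtx2, vtx3, vtx4]
  have hinv1 : s⁻¹ = s*(8-8*c)/5 := inv_eq_of_mul_eq_one_right (by linear_combination ((-3/5:ℝ) + (2/5:ℝ)*c) * hc + ((8/5:ℝ) + (-8/5:ℝ)*c) * hs2)
  have hinv2 : (4*s*c)⁻¹ = s*(8-8*c)/5*(4*c+2)/4 := inv_eq_of_mul_eq_one_right (by linear_combination ((1:ℝ) + (-6/5:ℝ)*c + (-8/5:ℝ)*c^2 + (8/5:ℝ)*c^3) * hc + ((16/5:ℝ)*c + (16/5:ℝ)*c^2 + (-32/5:ℝ)*c^3) * hs2)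
  have hd1 : ∀ a : ℝ, a / s = a * (s*(8-8*c)/5) := fun a => by rw [div_eq_mul_inv, hinv1]
  have hd2 : ∀ a : ℝ, a / (4*s*c) = a * (s*(8-8*c)/5*(4*c+2)/4) := fun a => by
    rw [div_eq_mul_inv, hinv2]
  simp only [hd1, hd2]
  linear_combination ((2/5:ℝ)*s*x 4^2 + (4/5:ℝ)*s*x 3*x 4 + (4/5:ℝ)*s*x 3^2 + (4/5:ℝ)*s*x 2*x 3 + (4/5:ℝ)*s*x 2^2 + (4/5:ℝ)*s*x 1*x 2 + (2/5:ℝ)*s*x 1^2 + (2/5:ℝ)*s*x 0^2 + (-8/5:ℝ)*s*c*x 3*x 4 + (-2/5:ℝ)*s*c*x 3^2 + (-4/5:ℝ)*s*c*x 2*x 4 + (-4/5:ℝ)*s*c*x 2*x 3 + (-2/5:ℝ)*s*c*x 2^2 + (-4/5:ℝ)*s*c*x 1*x 3 + (-8/5:ℝ)*s*c*x 1*x 2 + (4/5:ℝ)*s*c^2*x 3*x 4 + (4/5:ℝ)*s*c^2*x 2*x 4 + (4/5:ℝ)*s*c^2*x 1*x 3 + (4/5:ℝ)*s*c^2*x 1*x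 2) * hc + (0) * hs2

lemma beq0 (x : Fin 5 → ℝ) : butterfly 0 x = Function.update x 0
    ((Real.sqrt 5 + 1) * (x 4 + x 1) - x 0) := by
  have hs := hspos.ne'
  have hcn := hcpos.ne'
  simp only [butterfly, vert, show (0:Fin 5)-1 = 4 from rfl, show (0:Fin 5)+1 = 1 from rfl,
    nrm0, nrm1, nrm4]
  refine congrArg (Function.update x _) ?_
  rw [hg]; field_simp
  linear_combination ((-2:ℝ)*x 4*s + (-2:ℝ)*x 1*s) * hc
lemma beq1 (x : Fin 5 → ℝ) : butterfly 1 x = Function.update x 1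
    ((Real.sqrt 5 + 1) * (x 0 + x 2) - x 1) := by
  have hs := hspos.ne'
  have hcn := hcpos.ne'
  simp only [butterfly, vert, show (1:Fin 5)-1 = 0 from rfl, show (1:Fin 5)+1 = 2 from rfl,
    nrm0, nrm1, nrm2]
  refine congrArg (Function.update x _) ?_
  rw [hg]; field_simp
  linear_combination ((-2:ℝ)*x 2*s + (-2:ℝ)*x 0*s) * hc
lemma beq2 (x : Fin 5 → ℝ) : butterfly 2 x = Function.update x 2
    ((Real.sqrt 5 + 1) * (x 1 + x 3) - x 2) := by
  have hs := hspos.ne'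
  have hcn := hcpos.ne'
  simp only [butterfly, vert, show (2:Fin 5)-1 = 1 from rfl, show (2:Fin 5)+1 = 3 from rfl,
    nrm1, nrm2, nrm3]
  refine congrArg (Function.update x _) ?_
  have hD : -(c*(2*s*c)) - s*(2*c^2-1) ≠ 0 := by
    have e : -(c*(2*s*c)) - s*(2*c^2-1) = 2*s*c := by linear_combination (-s) * hc
    rw [e]; nlinarith [hspos, hcpos]
  rw [hg]; field_simp
  rw [sub_left_inj, div_eq_iff (ne_of_gt (by linarith [hcpos, hc] : -(2 * c ^ 2) - (2 * c ^ 2 - 1) > 0))]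
  linear_combination (4*c*x 3 + 2*x 1) * hc
lemma beq3 (x : Fin 5 → ℝ) : butterfly 3 x = Function.update x 3
    ((Real.sqrt 5 + 1) * (x 2 + x 4) - x 3) := by
  have hs := hspos.ne'
  have hcn := hcpos.ne'
  simp only [butterfly, vert, show (3:Fin 5)-1 = 2 from rfl, show (3:Fin 5)+1 = 4 from rfl,
    nrm2, nrm3, nrm4]
  refine congrArg (Function.update x _) ?_
  have hD : -((2*c^2-1)*s) - 2*s*c*c ≠ 0 := by
    have e : -((2*c^2-1)*s) - 2*s*c*c = 2*s*c := by linear_combination (-s) * hc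
    rw [e]; nlinarith [hspos, hcpos]
  rw [hg]; field_simp
  rw [sub_left_inj, div_eq_iff (ne_of_gt (by linarith [hcpos, hc] : -(2 * c ^ 2 - 1) - 2 * c ^ 2 > 0))]
  linear_combination (4*c*x 2 + 2*x 4) * hc
lemma beq4 (x : Fin 5 → ℝ) : butterfly 4 x = Function.update x 4
    ((Real.sqrt 5 + 1) * (x 3 + x 0) - x 4) := by
  have hs := hspos.ne'
  have hcn := hcpos.ne'
  simp only [butterfly, vert, show (4:Fin 5)-1 = 3 from rfl, show (4:Fin 5)+1 = 0 from rfl,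
    nrm3, nrm4, nrm0]
  refine congrArg (Function.update x _) ?_
  rw [hg]; field_simp
  linear_combination ((-2:ℝ)*x 3*s + (-2:ℝ)*x 0*s) * hc

lemma ap0 (x : Fin 5 → ℝ) : area (butterfly 0 x) = area x := by
  rw [beq0]
  simp only [area_formula, Function.update_apply, Fin.reduceEq, reduceIte]
  rw [hg]
  linear_combination (s/5 * ((-24:ℝ)*x 4^2 + (-48:ℝ)*x 4^2*c + (-48:ℝ)*x 1*x 4 + (-96:ℝ)*x 1*x 4*c + (-24:ℝ)*x 1^2 + (-48:ℝ)*x 1^2*c + (24:ℝ)*x 0*x 4 + (24:ℝ)*x 0*x 1)) * hc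

lemma ap1 (x : Fin 5 → ℝ) : area (butterfly 1 x) = area x := by
  rw [beq1]
  simp only [area_formula, Function.update_apply, Fin.reduceEq, reduceIte]
  rw [hg]
  linear_combination (s/5 * ((-24:ℝ)*x 2^2 + (-48:ℝ)*x 2^2*c + (24:ℝ)*x 1*x 2 + (-48:ℝ)*x 0*x 2 + (-96:ℝ)*x 0*x 2*c + (24:ℝ)*x 0*x 1 + (-24:ℝ)*x 0^2 + (-48:ℝ)*x 0^2*c)) * hc

lemma ap2 (x : Fin 5 → ℝ) : area (butterfly 2 x) = area x := by
  rw [beq2]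
  simp only [area_formula, Function.update_apply, Fin.reduceEq, reduceIte]
  rw [hg]
  linear_combination (s/5 * ((-24:ℝ)*x 3^2 + (-48:ℝ)*x 3^2*c + (24:ℝ)*x 2*x 3 + (-48:ℝ)*x 1*x 3 + (-96:ℝ)*x 1*x 3*c + (24:ℝ)*x 1*x 2 + (-24:ℝ)*x 1^2 + (-48:ℝ)*x 1^2*c)) * hc

lemma ap3 (x : Fin 5 → ℝ) : area (butterfly 3 x) = area x := by
  rw [beq3]
  simp only [area_formula, Function.update_apply, Fin.reduceEq, reduceIte]
  rw [hg]
  linear_combination (s/5 * ((-24:ℝ)*x 4^2 + (-48:ℝ)*x 4^2*c + (24:ℝ)*x 3*x 4 + (-48:ℝ)*x 2*x 4 + (-96:ℝ)*x 2*x 4*c + (24:ℝ)*x 2*x 3 + (-24:ℝ)*x 2^2 + (-48:ℝ)*x 2^2*c)) * hc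

lemma ap4 (x : Fin 5 → ℝ) : area (butterfly 4 x) = area x := by
  rw [beq4]
  simp only [area_formula, Function.update_apply, Fin.reduceEq, reduceIte]
  rw [hg]
  linear_combination (s/5 * ((24:ℝ)*x 3*x 4 + (-24:ℝ)*x 3^2 + (-48:ℝ)*x 3^2*c + (24:ℝ)*x 0*x 4 + (-48:ℝ)*x 0*x 3 + (-96:ℝ)*x 0*x 3*c + (-24:ℝ)*x 0^2 + (-48:ℝ)*x 0^2*c)) * hc

lemma main_aux (K Km Kp : Fin 5) (hm : Km ≠ K) (hp : Kp ≠ K)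
    (hbeq : ∀ x : Fin 5 → ℝ, butterfly K x = Function.update x K
      ((Real.sqrt 5 + 1) * (x Km + x Kp) - x K))
    (harea : ∀ x, area (butterfly K x) = area x) :
    (∃ L : (Fin 5 → ℝ) →ₗ[ℝ] (Fin 5 → ℝ), ∀ x, L x = butterfly K x) ∧
    (∀ x, butterfly K (butterfly K x) = x) ∧
    (∀ x, area (butterfly K x) = area x) ∧
    (butterfly K ≠ id) ∧
    (∃ F : Submodule ℝ (Fin 5 → ℝ),
      (F : Set (Fin 5 → ℝ)) = {x | butterfly K x = x} ∧
      Module.finrank ℝ F = 4) := by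
  set g : ℝ := Real.sqrt 5 + 1 with hgdef
  refine ⟨?_, ?_, harea, ?_, ?_⟩
  · refine ⟨LinearMap.pi (fun i => if i = K then
      (g • LinearMap.proj Km + g • LinearMap.proj Kp - LinearMap.proj K)
      else LinearMap.proj i), fun x => ?_⟩
    funext i
    rw [hbeq, LinearMap.pi_apply, Function.update_apply]
    by_cases h : i = K
    · simp [h]; ring
    · simp [h]
  · intro x
    rw [hbeq, hbeq]
    funext i
    rcases eq_or_ne i K with rfl | h
    · rw [Function.update_self, Function.update_of_ne hm, Function.update_of_ne hp,
        Function.update_self]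
      ring
    · rw [Function.update_of_ne h, Function.update_of_ne h]
  · intro h
    have h2 := congrFun (congrFun h (Pi.single K (1:ℝ))) K
    rw [hbeq] at h2
    rw [Function.update_self, Pi.single_eq_of_ne hm, Pi.single_eq_of_ne hp,
      Pi.single_eq_same, id] at h2
    rw [Pi.single_eq_same] at h2
    nlinarith [h2]
  · set φ : (Fin 5 → ℝ) →ₗ[ℝ] ℝ :=
      g • LinearMap.proj Km + g • LinearMap.proj Kp - (2:ℝ) • LinearMap.proj K with hφ
    have hφapp : ∀ x : Fin 5 → ℝ, φ x = g * x Km + g * x Kp - 2 * x K := by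
      intro x; simp [hφ]
    refine ⟨LinearMap.ker φ, ?_, ?_⟩
    · ext x
      simp only [SetLike.mem_coe, LinearMap.mem_ker, Set.mem_setOf_eq, hbeq,
        Function.update_eq_self_iff, hφapp]
      constructor <;> intro h <;> linear_combination h
    · have hsurj : Function.Surjective φ := by
        intro y
        refine ⟨Function.update (0 : Fin 5 → ℝ) K (-y/2), ?_⟩
        rw [hφapp, Function.update_of_ne hm, Function.update_of_ne hp,
          Function.update_self]
        simp
        ring
      have h1 := LinearMap.finrank_range_add_finrank_ker φ
      rw [LinearMap.range_eq_top.mpr hsurj, finrank_top] at h1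
      have h5 : Module.finrank ℝ (Fin 5 → ℝ) = 5 := by
        simp [Module.finrank_pi]
      have hr : Module.finrank ℝ ℝ = 1 := Module.finrank_self ℝ
      omega

/-- The butterfly move is a linear involution of the coordinate space `ℝ⁵` of
equiangular pentagons which preserves signed area; moreover it is not the
identity and its fixed-point set is a linear subspace of codimension one.
Hence, on the signed-area quadratic form, it acts as a reflection. -/
theorem butterfly_is_area_preserving_reflection (k : Fin 5) :
    (∃ L : (Fin 5 → ℝ) →ₗ[ℝ] (Fin 5 → ℝ), ∀ x, L x = butterfly k x) ∧
    (∀ x, butterfly k (butterfly k x) = x) ∧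
    (∀ x, area (butterfly k x) = area x) ∧
    (butterfly k ≠ id) ∧
    (∃ F : Submodule ℝ (Fin 5 → ℝ),
      (F : Set (Fin 5 → ℝ)) = {x | butterfly k x = x} ∧
      Module.finrank ℝ F = 4) := by
  have hk : k = 0 ∨ k = 1 ∨ k = 2 ∨ k = 3 ∨ k = 4 := by fin_cases k <;> decide
  rcases hk with rfl | rfl | rfl | rfl | rfl
  · exact main_aux 0 4 1 (by decide) (by decide) beq0 ap0
  · exact main_aux 1 0 2 (by decide) (by decide) beq1 ap1
  · exact main_aux 2 1 3 (by decide) (by decide) beq2 ap2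
  · exact main_aux 3 2 4 (by decide) (by decide) beq3 ap3
  · exact main_aux 4 3 0 (by decide) (by decide) beq4 ap4

end ButterflyPentagon
end
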